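/- Let X ⊆ ℝ⁴ be a convex set and y ∈ X. If v₀ and v₁ both lie in the Reeb cone at y, i.e. vⱼ ∈ T_y⁺X and −i·vⱼ ∈ N_y⁺X for j = 0, 1, then ω₀(v₀, v₁) = 0. (This claim is established in the proof of Lemma 3.8 of the paper.) -/

import Mathlib

open RealInnerProductSpace

/-- The standard complex structure on ℝ⁴:
`i(x₁,x₂,y₁,y₂) = (−y₁,−y₂,x₁,x₂)`. -/
def Imap (v : EuclideanSpace ℝ (Fin 4)) : EuclideanSpace ℝ (Fin 4) :=
  WithLp.toLp 2 ![-(v 2), -(v 3), v 0, v 1]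

/-- The standard symplectic form on ℝ⁴: `ω₀(u,v) = ⟪i·u, v⟫`. -/
noncomputable def omega0 (u v : EuclideanSpace ℝ (Fin 4)) : ℝ := ⟪Imap u, v⟫

/-- The tangent cone `T_y⁺X`. -/
def tangentConePlus (X : Set (EuclideanSpace ℝ (Fin 4)))
    (y : EuclideanSpace ℝ (Fin 4)) : Set (EuclideanSpace ℝ (Fin 4)) :=
  closure {v | ∃ ε : ℝ, 0 < ε ∧ y + ε • v ∈ X}

/-- The positive normal cone `N_y⁺X`. -/
def normalConePlus (X : Set (EuclideanSpace ℝ (Fin 4)))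
    (y : EuclideanSpace ℝ (Fin 4)) : Set (EuclideanSpace ℝ (Fin 4)) :=
  {v | ∀ x ∈ X, ⟪x - y, v⟫ ≤ 0}

/-! Each Reeb vector pairs nonnegatively with every tangent vector under `ω₀`; applied to the two
vectors in both orders, antisymmetry of `ω₀` forces the pairing to vanish. -/

theorem omega0_antisymm (u v : EuclideanSpace ℝ (Fin 4)) : omega0 u v = -omega0 v u := by
  simp [omega0, Imap, PiLp.inner_apply, Fin.sum_univ_four]
  ring

theorem inner_nonpos_of_mem_tangentConePlus_of_mem_normalConePlus
    {X : Set (EuclideanSpace ℝ (Fin 4))} {y v n : EuclideanSpace ℝ (Fin 4)}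
    (hv : v ∈ tangentConePlus X y) (hn : n ∈ normalConePlus X y) : ⟪v, n⟫ ≤ 0 := by
  have hclosed : IsClosed {u : EuclideanSpace ℝ (Fin 4) | ⟪u, n⟫ ≤ 0} :=
    isClosed_le (continuous_id.inner continuous_const) continuous_const
  refine closure_minimal ?_ hclosed hv
  rintro u ⟨ε, hε, hu⟩
  have h := hn _ hu
  rw [add_sub_cancel_left, real_inner_smul_left] at h
  exact nonpos_of_mul_nonpos_right h hε

theorem omega0_nonneg_of_mem_tangentConePlus
    {X : Set (EuclideanSpace ℝ (Fin 4))} {y v w : EuclideanSpace ℝ (Fin 4)}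
    (hv : v ∈ tangentConePlus X y) (hw : -(Imap w) ∈ normalConePlus X y) :
    0 ≤ omega0 w v := by
  have h := inner_nonpos_of_mem_tangentConePlus_of_mem_normalConePlus hv hw
  rw [inner_neg_right, real_inner_comm] at h
  exact neg_nonpos.mp h

theorem omega0_eq_zero_of_mem_reebCone_general
    (X : Set (EuclideanSpace ℝ (Fin 4)))
    (y : EuclideanSpace ℝ (Fin 4))
    (v₀ v₁ : EuclideanSpace ℝ (Fin 4))
    (hv₀T : v₀ ∈ tangentConePlus X y) (hv₀N : -(Imap v₀) ∈ normalConePlus X y)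
    (hv₁T : v₁ ∈ tangentConePlus X y) (hv₁N : -(Imap v₁) ∈ normalConePlus X y) :
    omega0 v₀ v₁ = 0 := by
  have h₀₁ := omega0_nonneg_of_mem_tangentConePlus hv₁T hv₀N
  have h₁₀ := omega0_nonneg_of_mem_tangentConePlus hv₀T hv₁N
  linarith [omega0_antisymm v₀ v₁]

/-- (From the proof of Lemma 3.8.) If `X ⊆ ℝ⁴` is convex and `y ∈ X`, then any two
vectors `v₀, v₁` of the Reeb cone at `y` (i.e. `vⱼ ∈ T_y⁺X` and `−i·vⱼ ∈ N_y⁺X`)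
satisfy `ω₀(v₀, v₁) = 0`. -/
theorem omega0_eq_zero_of_mem_reebCone
    (X : Set (EuclideanSpace ℝ (Fin 4))) (hX : Convex ℝ X)
    (y : EuclideanSpace ℝ (Fin 4)) (hy : y ∈ X)
    (v₀ v₁ : EuclideanSpace ℝ (Fin 4))
    (hv₀T : v₀ ∈ tangentConePlus X y) (hv₀N : -(Imap v₀) ∈ normalConePlus X y)
    (hv₁T : v₁ ∈ tangentConePlus X y) (hv₁N : -(Imap v₁) ∈ normalConePlus X y) :
    omega0 v₀ v₁ = 0 :=
  omega0_eq_zero_of_mem_reebCone_general X y v₀ v₁ hv₀T hv₀N hv₁T hv₁N
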